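/- arXiv:1705.08961 — 6 statements merged into one kernel-verified Lean document; each statement's English description precedes it below -/
import Mathlib

section
/- Theorem 1, applicability part (safety of learned preconditions): Let a be an action with true preconditions pre(a) and effects eff(a), and let T(a) be a nonempty set of pairs (s, s') each consistent with the true model (s satisfies pre(a) and s' = apply s a). Let preU(a) be the learned conservative preconditions, characterized by: preU(a) i = some v if and only if every pair (s, s') ∈ T(a) has s i = v. Then for every state t, if t satisfies preU(a), then t satisfies pre(a); i.e., applicability of a at t according to the learned model implies applicability according to the true model. -/
/-- A state `s : X → V` satisfies a partial assignment `p : X → Option V`. -/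
def Satisfies {X V : Type*} (s : X → V) (p : X → Option V) : Prop :=
  ∀ i v, p i = some v → s i = v

/-- Applying an action with effects `eff` to a state `s`. -/
def applyAct {X V : Type*} (s : X → V) (eff : X → Option V) : X → V :=
  fun i => (eff i).getD (s i)

section

variable {X V : Type*}

theorem Satisfies.of_forall_eq_some_imp {s : X → V} {p q : X → Option V}
    (hpq : ∀ i v, p i = some v → q i = some v) (hs : Satisfies s q) : Satisfies s p :=
  fun i v h => hs i v (hpq i v h)

theorem eq_some_of_forall_satisfies {S : Set (X → V)} {p q : X → Option V}
    (hq : ∀ i v, (∀ s ∈ S, s i = v) → q i = some v) (hS : ∀ s ∈ S, Satisfies s p)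
    {i : X} {v : V} (h : p i = some v) : q i = some v :=
  hq i v fun s hs => hS s hs i v h

end

theorem learned_preconditions_safe_general {X V : Type*}
    (pre eff : X → Option V) (T : Set ((X → V) × (X → V)))
    (hcons : ∀ p ∈ T, Satisfies p.1 pre ∧ p.2 = applyAct p.1 eff)
    (preU : X → Option V)
    (hpreU : ∀ i v, preU i = some v ↔ ∀ p ∈ T, p.1 i = v)
    (t : X → V) (ht : Satisfies t preU) :
    Satisfies t pre := by
  have hcommon : ∀ i v, (∀ s ∈ Prod.fst '' T, s i = v) → preU i = some v :=
    fun i v h => (hpreU i v).mpr fun p hp => h p.1 ⟨p, hp, rfl⟩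
  have hpre : ∀ s ∈ Prod.fst '' T, Satisfies s pre := by
    rintro _ ⟨p, hp, rfl⟩
    exact (hcons p hp).1
  exact ht.of_forall_eq_some_imp fun _ _ => eq_some_of_forall_satisfies hcommon hpre

/-- Theorem 1, applicability part: if the learned conservative precondition
`preU` consists exactly of the assignments common to all observed pre-states
of a nonempty set of pairs consistent with the true model, then any state
satisfying `preU` also satisfies the true precondition `pre`. -/
theorem learned_preconditions_safe {X V : Type*}
    (pre eff : X → Option V) (T : Set ((X → V) × (X → V)))
    (hne : T.Nonempty)
    (hcons : ∀ p ∈ T, Satisfies p.1 pre ∧ p.2 = applyAct p.1 eff)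
    (preU : X → Option V)
    (hpreU : ∀ i v, preU i = some v ↔ ∀ p ∈ T, p.1 i = v)
    (t : X → V) (ht : Satisfies t preU) :
    Satisfies t pre :=
  learned_preconditions_safe_general pre eff T hcons preU hpreU t ht
end

section
/- Theorem 1, effects part (safety of learned effects): Let a be an action with true preconditions pre(a) and effects eff(a), and let T(a) be a nonempty set of pairs (s, s') each consistent with the true model (s satisfies pre(a) and s' = apply s a). Let preU(a) be the learned preconditions, characterized by preU(a) i = some v iff every (s, s') ∈ T(a) has s i = v, and let effL(a) be the learned effects, characterized by effL(a) i = some v iff some (s, s') ∈ T(a) has s' i = v and s i ≠ v. Then for every state t that satisfies preU(a), applying a to t under the learned effects gives the same result as under the true effects: for every variable i, (effL(a) i).getD (t i) = (eff a i).getD (t i). -/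
/-!
An observed change `s i ≠ s' i = v` can only come from a true effect `eff i = some v`, so every
learned effect is a true one. Conversely, a true effect `eff i = some w` that is never observed as
a change means that every observed pre-state already had `s i = w`; then the conservative
preconditions fix `i` to `w`, and on such states the effect is invisible.
-/

theorem Option.eq_some_of_getD_eq_of_ne {α : Type*} {o : Option α} {x v : α}
    (h : o.getD x = v) (hx : x ≠ v) : o = some v := by
  cases o <;> simp_all

section Observations

variable {X V : Type*} {eff : X → Option V} {T : Set ((X → V) × (X → V))}

theorem eff_eq_some_of_observed_change (hT : ∀ p ∈ T, p.2 = applyAct p.1 eff)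
    {p : (X → V) × (X → V)} (hp : p ∈ T) {i : X} {v : V}
    (hchg : p.2 i = v) (hne : p.1 i ≠ v) :
    eff i = some v := by
  rw [hT p hp] at hchg
  exact Option.eq_some_of_getD_eq_of_ne hchg hne

theorem fst_eq_of_eff_eq_some_of_unobserved (hT : ∀ p ∈ T, p.2 = applyAct p.1 eff)
    {i : X} {w : V} (heff : eff i = some w) (hunobs : ¬∃ p ∈ T, p.2 i = w ∧ p.1 i ≠ w) :
    ∀ p ∈ T, p.1 i = w := by
  intro p hp
  by_contra hne
  exact hunobs ⟨p, hp, by simp [hT p hp, applyAct, heff], hne⟩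

end Observations

theorem learned_effects_safe_general {X V : Type*}
    (pre eff : X → Option V) (T : Set ((X → V) × (X → V)))
    (hcons : ∀ p ∈ T, Satisfies p.1 pre ∧ p.2 = applyAct p.1 eff)
    (preU effL : X → Option V)
    (hpreU : ∀ i v, preU i = some v ↔ ∀ p ∈ T, p.1 i = v)
    (heffL : ∀ i v, effL i = some v ↔ ∃ p ∈ T, p.2 i = v ∧ p.1 i ≠ v)
    (t : X → V) (ht : Satisfies t preU) :
    ∀ i, (effL i).getD (t i) = (eff i).getD (t i) := by
  intro i
  have hT : ∀ p ∈ T, p.2 = applyAct p.1 eff := fun p hp => (hcons p hp).2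
  cases hEL : effL i with
  | some v =>
    obtain ⟨p, hp, hchg, hne⟩ := (heffL i v).1 hEL
    simp [eff_eq_some_of_observed_change hT hp hchg hne]
  | none =>
    cases hE : eff i with
    | none => rfl
    | some w =>
      have hunobs : ¬∃ p ∈ T, p.2 i = w ∧ p.1 i ≠ w := by
        simp [← heffL, hEL]
      have hti : t i = w :=
        ht i w ((hpreU i w).2 (fst_eq_of_eff_eq_some_of_unobserved hT hE hunobs))
      simp [hti]

/-- Theorem 1, effects part: for any state `t` satisfying the learned
conservative preconditions `preU`, applying the learned effects `effL`
gives the same result as applying the true effects `eff`. -/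
theorem learned_effects_safe {X V : Type*}
    (pre eff : X → Option V) (T : Set ((X → V) × (X → V)))
    (hne : T.Nonempty)
    (hcons : ∀ p ∈ T, Satisfies p.1 pre ∧ p.2 = applyAct p.1 eff)
    (preU effL : X → Option V)
    (hpreU : ∀ i v, preU i = some v ↔ ∀ p ∈ T, p.1 i = v)
    (heffL : ∀ i v, effL i = some v ↔ ∃ p ∈ T, p.2 i = v ∧ p.1 i ≠ v)
    (t : X → V) (ht : Satisfies t preU) :
    ∀ i, (effL i).getD (t i) = (eff i).getD (t i) :=
  learned_effects_safe_general pre eff T hcons preU effL hpreU heffL t ht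
end

section
/- Corollary 1 (Soundness of the conservative model-free planner): Suppose every action a in a list of actions π = [a₁, …, a_k] has a nonempty set T(a) of observed pairs, each consistent with the true action model (pre, eff), and let (preU, effL) be the learned action model characterized by: preU(a) i = some v iff every (s, s') ∈ T(a) has s i = v, and effL(a) i = some v iff some (s, s') ∈ T(a) has s' i = v and s i ≠ v. If π is executable from an initial state s_I under the learned model and its final state under the learned model satisfies a goal partial assignment s_G, then π is also executable from s_I under the true model, its final state under the true model equals its final state under the learned model, and hence the final state under the true model satisfies s_G. -/
/-- Applying action `a` to state `s` under the action model whose effects are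
given by `E`. -/
def applyM {X V A : Type*} (E : A → X → Option V) (s : X → V) (a : A) : X → V :=
  fun i => (E a i).getD (s i)

/-- A list of actions is executable from a state under the action model
`(P, E)`: each action's precondition holds at the state reached so far. -/
def Executable {X V A : Type*} (P E : A → X → Option V) : (X → V) → List A → Prop
  | _, [] => True
  | s, a :: rest => Satisfies s (P a) ∧ Executable P E (applyM E s a) rest

/-!
Every observed transition of an action satisfies its true precondition, so any value the
learned precondition `preU` demands is one the true precondition could demand; hence `preU`
is at least as strong as `pre`. A learned effect `effL a i = some w` is witnessed by an
observation in which `i` changed to `w`, which only a true effect `eff a i = some w` can do.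
Conversely, if `eff a i = some v` but nothing was learned for `i`, then `i` never changed in
any observation, so it was `v` in all of them and `preU` forces `s i = v`: applying either
model gives `v`. So from every state satisfying `preU a` both models apply `a` identically,
and a plan executable under the learned model runs through the same states under the true one.
-/

section Learned

variable {X V A : Type*} {pre eff preU effL : A → X → Option V}
  {T : Set ((X → V) × (X → V))} {a : A}

theorem satisfies_pre_of_satisfies_preU
    (hcons : ∀ p ∈ T, Satisfies p.1 (pre a))
    (hpreU : ∀ i v, preU a i = some v ↔ ∀ p ∈ T, p.1 i = v)
    {s : X → V} (hs : Satisfies s (preU a)) : Satisfies s (pre a) :=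
  fun i v hv => hs i v ((hpreU i v).2 fun p hp => hcons p hp i v hv)

theorem eff_eq_some_of_effL_eq_some
    (hcons : ∀ p ∈ T, p.2 = applyM eff p.1 a)
    (heffL : ∀ i v, effL a i = some v ↔ ∃ p ∈ T, p.2 i = v ∧ p.1 i ≠ v)
    {i : X} {w : V} (hw : effL a i = some w) : eff a i = some w := by
  obtain ⟨p, hp, hchanged, hne⟩ := (heffL i w).1 hw
  rw [hcons p hp] at hchanged
  cases h : eff a i with
  | none => exact absurd (by simpa [applyM, h] using hchanged) hne
  | some v => simp only [applyM, h, Option.getD_some] at hchanged; rw [hchanged]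

theorem preU_eq_some_of_effL_eq_none
    (hcons : ∀ p ∈ T, p.2 = applyM eff p.1 a)
    (hpreU : ∀ i v, preU a i = some v ↔ ∀ p ∈ T, p.1 i = v)
    (heffL : ∀ i v, effL a i = some v ↔ ∃ p ∈ T, p.2 i = v ∧ p.1 i ≠ v)
    {i : X} {v : V} (hnone : effL a i = none) (hv : eff a i = some v) :
    preU a i = some v := by
  refine (hpreU i v).2 fun p hp => ?_
  by_contra hne
  have hlearned : effL a i = some v :=
    (heffL i v).2 ⟨p, hp, by simp [hcons p hp, applyM, hv], hne⟩
  simp [hnone] at hlearned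

theorem applyM_eq_of_satisfies_preU
    (hcons : ∀ p ∈ T, p.2 = applyM eff p.1 a)
    (hpreU : ∀ i v, preU a i = some v ↔ ∀ p ∈ T, p.1 i = v)
    (heffL : ∀ i v, effL a i = some v ↔ ∃ p ∈ T, p.2 i = v ∧ p.1 i ≠ v)
    {s : X → V} (hs : Satisfies s (preU a)) : applyM eff s a = applyM effL s a := by
  funext i
  simp only [applyM]
  cases hL : effL a i with
  | some w => simp [eff_eq_some_of_effL_eq_some hcons heffL hL]
  | none =>
    cases hE : eff a i with
    | none => rfl
    | some v => simp [hs i v (preU_eq_some_of_effL_eq_none hcons hpreU heffL hL hE)]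

end Learned

theorem executable_and_foldl_eq_of_refines {X V A : Type*} {P E P' E' : A → X → Option V}
    {π : List A}
    (hrefines : ∀ a ∈ π, ∀ s, Satisfies s (P' a) →
      Satisfies s (P a) ∧ applyM E s a = applyM E' s a)
    {s : X → V} (hexec : Executable P' E' s π) :
    Executable P E s π ∧ π.foldl (applyM E) s = π.foldl (applyM E') s := by
  induction π generalizing s with
  | nil => exact ⟨trivial, rfl⟩
  | cons a rest ih =>
    obtain ⟨hpre, hrest⟩ := hexec
    obtain ⟨hsat, happly⟩ := hrefines a List.mem_cons_self s hpre
    obtain ⟨hexec', hfold⟩ :=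
      ih (fun b hb => hrefines b (List.mem_cons_of_mem a hb)) hrest
    rw [List.foldl_cons, List.foldl_cons, happly]
    exact ⟨⟨hsat, happly ▸ hexec'⟩, hfold⟩

theorem conservative_planner_sound_general {X V A : Type*}
    (pre eff preU effL : A → X → Option V)
    (T : A → Set ((X → V) × (X → V)))
    (π : List A) (sI : X → V) (sG : X → Option V)
    (hcons : ∀ a ∈ π, ∀ p ∈ T a, Satisfies p.1 (pre a) ∧ p.2 = applyM eff p.1 a)
    (hpreU : ∀ a ∈ π, ∀ i v, preU a i = some v ↔ ∀ p ∈ T a, p.1 i = v)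
    (heffL : ∀ a ∈ π, ∀ i v, effL a i = some v ↔ ∃ p ∈ T a, p.2 i = v ∧ p.1 i ≠ v)
    (hexec : Executable preU effL sI π)
    (hgoal : Satisfies (π.foldl (applyM effL) sI) sG) :
    Executable pre eff sI π ∧
      π.foldl (applyM eff) sI = π.foldl (applyM effL) sI ∧
      Satisfies (π.foldl (applyM eff) sI) sG := by
  have hrefines : ∀ a ∈ π, ∀ s, Satisfies s (preU a) →
      Satisfies s (pre a) ∧ applyM eff s a = applyM effL s a := fun a ha s hs =>
    ⟨satisfies_pre_of_satisfies_preU (fun p hp => (hcons a ha p hp).1) (hpreU a ha) hs,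
      applyM_eq_of_satisfies_preU (fun p hp => (hcons a ha p hp).2) (hpreU a ha)
        (heffL a ha) hs⟩
  obtain ⟨hexec', hfold⟩ := executable_and_foldl_eq_of_refines hrefines hexec
  exact ⟨hexec', hfold, hfold ▸ hgoal⟩

/-- Corollary 1 (soundness of the conservative model-free planner): if every
action of the plan `π` has a nonempty set of observed pairs consistent with
the true model `(pre, eff)`, and `(preU, effL)` is the learned conservative
model, then any plan executable under the learned model that reaches the goal
`s_G` is also executable under the true model, reaches the same final state,
and hence achieves the goal. -/
theorem conservative_planner_sound {X V A : Type*}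
    (pre eff preU effL : A → X → Option V)
    (T : A → Set ((X → V) × (X → V)))
    (π : List A) (sI : X → V) (sG : X → Option V)
    (hne : ∀ a ∈ π, (T a).Nonempty)
    (hcons : ∀ a ∈ π, ∀ p ∈ T a, Satisfies p.1 (pre a) ∧ p.2 = applyM eff p.1 a)
    (hpreU : ∀ a ∈ π, ∀ i v, preU a i = some v ↔ ∀ p ∈ T a, p.1 i = v)
    (heffL : ∀ a ∈ π, ∀ i v, effL a i = some v ↔ ∃ p ∈ T a, p.2 i = v ∧ p.1 i ≠ v)
    (hexec : Executable preU effL sI π)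
    (hgoal : Satisfies (π.foldl (applyM effL) sI) sG) :
    Executable pre eff sI π ∧
      π.foldl (applyM eff) sI = π.foldl (applyM effL) sI ∧
      Satisfies (π.foldl (applyM eff) sI) sG :=
  conservative_planner_sound_general pre eff preU effL T π sI sG hcons hpreU heffL hexec hgoal
end

section
/- Trajectory replay under the learned model (deterministic core of Lemma 2): Let ⟨s₁, a₁, s₂, …, a_{n-1}, s_n⟩ be a trajectory consistent with the true action model, i.e., for each j, s_j satisfies pre(a_j) and s_{j+1} = apply s_j a_j. Suppose each action a_j has a nonempty set T(a_j) of observed pairs consistent with the true model, and let (preU, effL) be the learned action model characterized by: preU(a) i = some v iff every (s, s') ∈ T(a) has s i = v, and effL(a) i = some v iff some (s, s') ∈ T(a) has s' i = v and s i ≠ v. If additionally each state s_j satisfies preU(a_j), then the action list [a₁, …, a_{n-1}] is executable from s₁ under the learned model, and executing the first j actions under the learned model from s₁ yields exactly the state s_{j+1} for every j. -/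
/-! The learned model replays every step of the trajectory exactly. Where the learned effect
sets `i` to `v`, some observation changed `i` to `v`, so the true effect sets `i` to `v` too.
Where the learned effect is silent but the true effect sets `i` to `v`, every observed pre-state
already had `i = v` (otherwise that observation would have put `v` into the learned effect), so
`i = v` is a learned precondition and the current state has `i = v` as well. Executability and
the replay then follow step by step along the trajectory. -/

section

variable {X V A : Type*}

theorem executable_iff_forall_foldl_take {P E : A → X → Option V} {s : X → V} {l : List A} :
    Executable P E s l ↔
      ∀ (k : ℕ) (hk : k < l.length), Satisfies ((l.take k).foldl (applyM E) s) (P l[k]) := by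
  induction l generalizing s with
  | nil => simp [Executable]
  | cons a l ih =>
    simp only [Executable, ih, List.length_cons, Nat.forall_lt_succ_left', List.take_zero,
      List.foldl_nil, List.getElem_cons_zero, List.take_succ_cons, List.foldl_cons,
      List.getElem_cons_succ]

theorem foldl_take_ofFn_eq_of_step {E : A → X → Option V} {n : ℕ}
    {states : Fin (n + 1) → X → V} {acts : Fin n → A}
    (hstep : ∀ j : Fin n, applyM E (states j.castSucc) (acts j) = states j.succ)
    (j : Fin (n + 1)) :
    ((List.ofFn acts).take j).foldl (applyM E) (states 0) = states j := by
  induction j using Fin.induction with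
  | zero => simp
  | succ j ih =>
    have hj : (j : ℕ) < (List.ofFn acts).length := by simp
    rw [Fin.val_castSucc] at ih
    rw [Fin.val_succ, List.take_succ_eq_append_getElem hj, List.foldl_append, ih]
    simpa using hstep j

theorem executable_ofFn_of_step {P E : A → X → Option V} {n : ℕ}
    {states : Fin (n + 1) → X → V} {acts : Fin n → A}
    (hsat : ∀ j : Fin n, Satisfies (states j.castSucc) (P (acts j)))
    (hstep : ∀ j : Fin n, applyM E (states j.castSucc) (acts j) = states j.succ) :
    Executable P E (states 0) (List.ofFn acts) := by
  refine executable_iff_forall_foldl_take.2 fun k hk => ?_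
  rw [List.length_ofFn] at hk
  have hreach := foldl_take_ofFn_eq_of_step hstep (Fin.castSucc ⟨k, hk⟩)
  simp only [Fin.val_castSucc] at hreach
  simpa [hreach] using hsat ⟨k, hk⟩

theorem applyM_apply_of_eq_some {E : A → X → Option V} {a : A} {i : X} {v : V}
    (h : E a i = some v) (s : X → V) : applyM E s a i = v := by
  simp [applyM, h]

theorem applyM_apply_of_eq_none {E : A → X → Option V} {a : A} {i : X}
    (h : E a i = none) (s : X → V) : applyM E s a i = s i := by
  simp [applyM, h]

theorem eq_some_of_applyM_apply_ne {E : A → X → Option V} {a : A} {s : X → V} {i : X}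
    (h : applyM E s a i ≠ s i) : E a i = some (applyM E s a i) := by
  cases he : E a i with
  | none => exact absurd (applyM_apply_of_eq_none he s) h
  | some v => rw [applyM_apply_of_eq_some he]

theorem applyM_learned_eq_applyM {E L : A → X → Option V} {T : Set ((X → V) × (X → V))}
    {a : A} {s : X → V}
    (hT : ∀ p ∈ T, p.2 = applyM E p.1 a)
    (hL : ∀ i v, L a i = some v ↔ ∃ p ∈ T, p.2 i = v ∧ p.1 i ≠ v)
    (hs : ∀ i v, (∀ p ∈ T, p.1 i = v) → s i = v) :
    applyM L s a = applyM E s a := by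
  funext i
  cases hLi : L a i with
  | some v =>
    obtain ⟨p, hp, hp₂, hp₁⟩ := (hL i v).1 hLi
    rw [hT p hp] at hp₂
    have hEi : E a i = some v := hp₂ ▸ eq_some_of_applyM_apply_ne (hp₂ ▸ hp₁.symm)
    rw [applyM_apply_of_eq_some hLi, applyM_apply_of_eq_some hEi]
  | none =>
    rw [applyM_apply_of_eq_none hLi]
    cases hEi : E a i with
    | none => rw [applyM_apply_of_eq_none hEi]
    | some v =>
      rw [applyM_apply_of_eq_some hEi]
      refine hs i v fun p hp => ?_
      by_contra hp₁
      have hp₂ : p.2 i = v := by rw [hT p hp, applyM_apply_of_eq_some hEi]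
      simpa [hLi] using (hL i v).2 ⟨p, hp, hp₂, hp₁⟩

end

theorem trajectory_replay_general {X V A : Type*} (n : ℕ)
    (pre eff preU effL : A → X → Option V)
    (T : A → Set ((X → V) × (X → V)))
    (states : Fin (n + 1) → X → V) (acts : Fin n → A)
    (htraj : ∀ j : Fin n,
      Satisfies (states j.castSucc) (pre (acts j)) ∧
      states j.succ = applyM eff (states j.castSucc) (acts j))
    (hcons : ∀ j : Fin n, ∀ p ∈ T (acts j),
      Satisfies p.1 (pre (acts j)) ∧ p.2 = applyM eff p.1 (acts j))
    (hpreU : ∀ j : Fin n, ∀ i v,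
      preU (acts j) i = some v ↔ ∀ p ∈ T (acts j), p.1 i = v)
    (heffL : ∀ j : Fin n, ∀ i v,
      effL (acts j) i = some v ↔ ∃ p ∈ T (acts j), p.2 i = v ∧ p.1 i ≠ v)
    (hsat : ∀ j : Fin n, Satisfies (states j.castSucc) (preU (acts j))) :
    Executable preU effL (states 0) (List.ofFn acts) ∧
      ∀ j : Fin (n + 1),
        ((List.ofFn acts).take j).foldl (applyM effL) (states 0) = states j := by
  have hstep : ∀ j : Fin n, applyM effL (states j.castSucc) (acts j) = states j.succ := by
    intro j
    rw [(htraj j).2]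
    exact applyM_learned_eq_applyM (fun p hp => (hcons j p hp).2) (heffL j)
      fun i v h => hsat j i v ((hpreU j i v).2 h)
  exact ⟨executable_ofFn_of_step hsat hstep, foldl_take_ofFn_eq_of_step hstep⟩

/-- Deterministic core of Lemma 2 (trajectory replay under the learned
model): given a trajectory `⟨s₀, a₀, s₁, …, a_{n-1}, s_n⟩` consistent with the
true model `(pre, eff)`, where every action has a nonempty set of consistent
observed pairs and every state of the trajectory satisfies the learned
conservative precondition of the action applied at it, the list of actions is
executable from `s₀` under the learned model `(preU, effL)`, and executing the
first `j` actions under the learned model reproduces state `s_j`. -/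
theorem trajectory_replay {X V A : Type*} (n : ℕ)
    (pre eff preU effL : A → X → Option V)
    (T : A → Set ((X → V) × (X → V)))
    (states : Fin (n + 1) → X → V) (acts : Fin n → A)
    (htraj : ∀ j : Fin n,
      Satisfies (states j.castSucc) (pre (acts j)) ∧
      states j.succ = applyM eff (states j.castSucc) (acts j))
    (hne : ∀ j : Fin n, (T (acts j)).Nonempty)
    (hcons : ∀ j : Fin n, ∀ p ∈ T (acts j),
      Satisfies p.1 (pre (acts j)) ∧ p.2 = applyM eff p.1 (acts j))
    (hpreU : ∀ j : Fin n, ∀ i v,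
      preU (acts j) i = some v ↔ ∀ p ∈ T (acts j), p.1 i = v)
    (heffL : ∀ j : Fin n, ∀ i v,
      effL (acts j) i = some v ↔ ∃ p ∈ T (acts j), p.2 i = v ∧ p.1 i ≠ v)
    (hsat : ∀ j : Fin n, Satisfies (states j.castSucc) (preU (acts j))) :
    Executable preU effL (states 0) (List.ofFn acts) ∧
      ∀ j : Fin (n + 1),
        ((List.ofFn acts).take j).foldl (applyM effL) (states 0) = states j :=
  trajectory_replay_general n pre eff preU effL T states acts htraj hcons hpreU heffL hsat
end

section
/- Lemma 3 (no inadequate action model survives): Let (Ω, μ) be a probability space, let ε, δ ∈ (0,1), let d ≥ 2 and K be natural numbers, and let B be a finite set with |B| ≤ d^K (the set of ε-inadequate precondition assignments). For each b ∈ B let W_b ⊆ Ω be a measurable set with μ(W_b) ≥ ε/2 (the event of sampling a trajectory that rules out b). Let m be a natural number with (m : ℝ) ≥ (2 · Real.log d) / ε · (K + Real.logb 2 (2 / δ)), and let μ^m be the product measure on Fin m → Ω of m independent copies of μ. Then μ^m {ω | ∃ b ∈ B, ∀ i : Fin m, ω i ∉ W_b} ≤ δ/2. -/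
/-!
A fixed inadequate assignment `b` survives one sample with probability at most `1 - ε/2`,
hence all `m` independent samples with probability at most `(1 - ε/2)^m ≤ exp (-ε m / 2)`.
A union bound over the at most `d^K` assignments leaves `d^K exp (-ε m / 2)`, and the
choice of `m` makes `ε m / 2 ≥ K log d + log (2/δ)` because `log d ≥ log 2`.
-/

open MeasureTheory

namespace MeasureTheory.Measure

variable {ι Ω : Type*} [Fintype ι] [MeasurableSpace Ω] (μ : Measure Ω) [IsProbabilityMeasure μ]

lemma pi_forall_notMem_le {W : Set Ω} (hW : MeasurableSet W) {p : ENNReal} (hp : p ≤ μ W) :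
    Measure.pi (fun _ : ι => μ) {ω | ∀ i, ω i ∉ W} ≤ (1 - p) ^ Fintype.card ι := by
  have hpi : {ω : ι → Ω | ∀ i, ω i ∉ W} = Set.univ.pi fun _ => Wᶜ := by
    ext ω
    simp
  rw [hpi, pi_pi, Finset.prod_const, Finset.card_univ, prob_compl_eq_one_sub hW]
  gcongr

lemma pi_exists_forall_notMem_le {β : Type*} (B : Finset β) {W : β → Set Ω}
    (hWm : ∀ b ∈ B, MeasurableSet (W b)) {p : ENNReal} (hp : ∀ b ∈ B, p ≤ μ (W b)) :
    Measure.pi (fun _ : ι => μ) {ω | ∃ b ∈ B, ∀ i, ω i ∉ W b} ≤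
      B.card * (1 - p) ^ Fintype.card ι := by
  have hunion : {ω : ι → Ω | ∃ b ∈ B, ∀ i, ω i ∉ W b} = ⋃ b ∈ B, {ω | ∀ i, ω i ∉ W b} := by
    ext ω
    simp
  calc Measure.pi (fun _ : ι => μ) {ω | ∃ b ∈ B, ∀ i, ω i ∉ W b}
      ≤ ∑ b ∈ B, Measure.pi (fun _ : ι => μ) {ω | ∀ i, ω i ∉ W b} :=
        hunion ▸ measure_biUnion_finset_le B _
    _ ≤ ∑ _b ∈ B, (1 - p) ^ Fintype.card ι :=
        Finset.sum_le_sum fun b hb => pi_forall_notMem_le μ (hWm b hb) (hp b hb)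
    _ = B.card * (1 - p) ^ Fintype.card ι := by rw [Finset.sum_const, nsmul_eq_mul]

end MeasureTheory.Measure

lemma Real.pow_mul_one_sub_pow_le {d x δ : ℝ} (hd : 2 ≤ d) (hx : x ≤ 1) (hδ₀ : 0 < δ)
    (hδ₁ : δ ≤ 1) (K m : ℕ) (hm : Real.log d * (K + Real.logb 2 (1 / δ)) ≤ x * m) :
    d ^ K * (1 - x) ^ m ≤ δ := by
  have hlog : Real.log (1 / δ) ≤ Real.log d * Real.logb 2 (1 / δ) := by
    have hlog_nonneg : 0 ≤ Real.log (1 / δ) :=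
      Real.log_nonneg (one_le_one_div hδ₀ hδ₁)
    have hlog2 : Real.log 2 ≤ Real.log d := Real.log_le_log two_pos hd
    rw [Real.logb, mul_div_assoc', le_div_iff₀ (Real.log_pos one_lt_two), mul_comm]
    exact mul_le_mul_of_nonneg_right hlog2 hlog_nonneg
  have hexp : K * Real.log d - x * m ≤ Real.log δ := by
    have hinv : Real.log (1 / δ) = -Real.log δ := by rw [one_div, Real.log_inv]
    linarith
  calc d ^ K * (1 - x) ^ m
      ≤ Real.exp (K * Real.log d) * Real.exp (-x) ^ m := by
        rw [Real.exp_nat_mul, Real.exp_log (by linarith)]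
        gcongr
        exact Real.one_sub_le_exp_neg x
    _ = Real.exp (K * Real.log d - x * m) := by
        rw [← Real.exp_nat_mul, ← Real.exp_add]
        ring_nf
    _ ≤ δ := (Real.exp_le_exp.mpr hexp).trans_eq (Real.exp_log hδ₀)

/-- Lemma 3 (no inadequate action model survives): if each inadequate
precondition assignment `b ∈ B` (with `|B| ≤ d^K`) is ruled out by a random
trajectory with probability at least `ε/2`, then after
`m ≥ (2 ln d) / ε · (K + log₂(2/δ))` independent samples, the probability
that some `b ∈ B` survives all samples is at most `δ/2`. -/
theorem no_inadequate_model_survives {Ω : Type*} [MeasurableSpace Ω]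
    (μ : Measure Ω) [IsProbabilityMeasure μ]
    (ε δ : ℝ) (hε : ε ∈ Set.Ioo (0 : ℝ) 1) (hδ : δ ∈ Set.Ioo (0 : ℝ) 1)
    (d K : ℕ) (hd : 2 ≤ d)
    {β : Type*} (B : Finset β) (hB : B.card ≤ d ^ K)
    (W : β → Set Ω)
    (hWm : ∀ b ∈ B, MeasurableSet (W b))
    (hW : ∀ b ∈ B, ENNReal.ofReal (ε / 2) ≤ μ (W b))
    (m : ℕ)
    (hm : (m : ℝ) ≥ (2 * Real.log d) / ε * (K + Real.logb 2 (2 / δ))) :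
    Measure.pi (fun _ : Fin m => μ)
        {ω : Fin m → Ω | ∃ b ∈ B, ∀ i : Fin m, ω i ∉ W b} ≤
      ENNReal.ofReal (δ / 2) := by
  obtain ⟨hε₀, hε₁⟩ := hε
  obtain ⟨hδ₀, hδ₁⟩ := hδ
  have hm' : Real.log d * (K + Real.logb 2 (1 / (δ / 2))) ≤ ε / 2 * m := by
    rw [one_div_div]
    rw [ge_iff_le, div_mul_eq_mul_div, div_le_iff₀ hε₀] at hm
    linarith
  have hreal : (B.card : ℝ) * (1 - ε / 2) ^ m ≤ δ / 2 :=
    calc (B.card : ℝ) * (1 - ε / 2) ^ m ≤ (d : ℝ) ^ K * (1 - ε / 2) ^ m := by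
          have hq : 0 ≤ 1 - ε / 2 := by linarith
          gcongr
          exact_mod_cast hB
      _ ≤ δ / 2 := Real.pow_mul_one_sub_pow_le (by exact_mod_cast hd) (by linarith)
          (by positivity) (by linarith) K m hm'
  calc Measure.pi (fun _ : Fin m => μ) {ω | ∃ b ∈ B, ∀ i : Fin m, ω i ∉ W b}
      ≤ B.card * (1 - ENNReal.ofReal (ε / 2)) ^ m := by
        simpa using Measure.pi_exists_forall_notMem_le (ι := Fin m) μ B hWm hW
    _ = ENNReal.ofReal (B.card * (1 - ε / 2) ^ m) := by
        rw [ENNReal.ofReal_mul (by positivity), ENNReal.ofReal_natCast,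
          ENNReal.ofReal_pow (by linarith), ENNReal.ofReal_sub _ (by positivity),
          ENNReal.ofReal_one]
    _ ≤ ENNReal.ofReal (δ / 2) := ENNReal.ofReal_le_ofReal hreal
end

section
/- Probabilistic core of Theorem 2: Let (Ω, μ) be a probability space, let ε, δ ∈ (0,1), let d ≥ 2, N ≥ 1, and K be natural numbers. Let J be a finite index set with |J| ≤ N and for each j ∈ J a measurable set E_j ⊆ Ω with μ(E_j) ≥ ε / (2N); let B be a finite set with |B| ≤ d^(K·N) and for each b ∈ B a measurable set W_b ⊆ Ω with μ(W_b) ≥ ε/2. Let m be a natural number with (m : ℝ) ≥ (2 · Real.log d) · N / ε · (K + Real.logb 2 (2 * N / δ)), and let μ^m be the product measure on Fin m → Ω of m independent copies of μ. Then μ^m {ω | (∀ j ∈ J, ∃ i : Fin m, ω i ∈ E_j) ∧ (∀ b ∈ B, ∃ i : Fin m, ω i ∈ W_b)} ≥ 1 - δ. -/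
/-!
For a single event `S` with `μ S ≥ q`, the chance that `m` independent samples all miss `S` is
`(1 - μ S)^m ≤ exp (-q m)`. A union bound over the at most `N` events `E j` and the at most
`d^(K N)` events `W b` bounds the failure probability by
`N exp (-ε m / (2N)) + d^(K N) exp (-ε m / 2)`, and the sample bound on `m` makes each of the two
terms at most `δ / 2`: since `log d ≥ log 2`, it gives `ε m ≥ 2N (K log d + log (2N/δ))`.
-/

open MeasureTheory Real

lemma ENNReal.one_sub_ofReal_le_ofReal_exp_neg (q : ℝ) :
    1 - ENNReal.ofReal q ≤ ENNReal.ofReal (exp (-q)) := by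
  rcases le_total 0 q with hq | hq
  · rw [← ENNReal.ofReal_one, ← ENNReal.ofReal_sub _ hq]
    exact ENNReal.ofReal_le_ofReal (one_sub_le_exp_neg q)
  · rw [ENNReal.ofReal_of_nonpos hq, tsub_zero, ENNReal.one_le_ofReal]
    exact one_le_exp (by linarith)

lemma ENNReal.ofReal_one_sub_le_of_measure_compl_le {α : Type*} [MeasurableSpace α]
    {μ : Measure α} [IsProbabilityMeasure μ] {s : Set α} {δ : ℝ} (hδ : 0 ≤ δ)
    (h : μ sᶜ ≤ ENNReal.ofReal δ) : ENNReal.ofReal (1 - δ) ≤ μ s := by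
  rw [ENNReal.ofReal_sub _ hδ, ENNReal.ofReal_one, tsub_le_iff_right]
  calc 1 = μ Set.univ := measure_univ.symm
    _ ≤ μ s + μ sᶜ := measure_univ_le_add_compl s
    _ ≤ μ s + ENNReal.ofReal δ := by gcongr

section Sampling

variable {Ω : Type*} [MeasurableSpace Ω] (μ : Measure Ω) [IsProbabilityMeasure μ] (m : ℕ)

lemma measure_pi_forall_notMem_le {S : Set Ω} (hS : MeasurableSet S) {q : ℝ}
    (h : ENNReal.ofReal q ≤ μ S) :
    Measure.pi (fun _ : Fin m => μ) {ω | ∀ i, ω i ∉ S} ≤ ENNReal.ofReal (exp (-(q * m))) := by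
  have hpi : {ω : Fin m → Ω | ∀ i, ω i ∉ S} = Set.univ.pi fun _ => Sᶜ := by
    ext ω; simp [Set.mem_pi]
  have hcompl : μ Sᶜ ≤ ENNReal.ofReal (exp (-q)) := by
    rw [prob_compl_eq_one_sub hS]
    exact (tsub_le_tsub_left h 1).trans (ENNReal.one_sub_ofReal_le_ofReal_exp_neg q)
  rw [hpi, Measure.pi_pi, Finset.prod_const, Finset.card_univ, Fintype.card_fin,
    show -(q * m) = m * -q by ring, exp_nat_mul, ENNReal.ofReal_pow (exp_nonneg _)]
  gcongr

lemma measure_pi_exists_forall_notMem_le {ι : Type*} (J : Finset ι) {E : ι → Set Ω}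
    (hEm : ∀ j ∈ J, MeasurableSet (E j)) {q : ℝ} (hE : ∀ j ∈ J, ENNReal.ofReal q ≤ μ (E j)) :
    Measure.pi (fun _ : Fin m => μ) {ω | ∃ j ∈ J, ∀ i, ω i ∉ E j} ≤
      ENNReal.ofReal (J.card * exp (-(q * m))) := by
  have hunion : {ω : Fin m → Ω | ∃ j ∈ J, ∀ i, ω i ∉ E j} = ⋃ j ∈ J, {ω | ∀ i, ω i ∉ E j} := by
    ext ω; simp
  rw [hunion, ENNReal.ofReal_mul (Nat.cast_nonneg _), ENNReal.ofReal_natCast, ← nsmul_eq_mul]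
  exact (measure_biUnion_finset_le J _).trans <| Finset.sum_le_card_nsmul _ _ _
    fun j hj => measure_pi_forall_notMem_le μ m (hEm j hj) (hE j hj)

end Sampling

lemma mul_exp_neg_le_of_log_div_le {c δ x : ℝ} (hc : 0 < c) (hδ : 0 < δ)
    (h : log (c / δ) ≤ x) : c * exp (-x) ≤ δ := by
  rw [log_div hc.ne' hδ.ne'] at h
  calc c * exp (-x) = exp (log c - x) := by rw [exp_sub, exp_log hc, div_eq_mul_inv, exp_neg]
    _ ≤ exp (log δ) := exp_le_exp.mpr (by linarith)
    _ = δ := exp_log hδ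

lemma mul_log_add_log_le_log_mul_add_logb_two {d K x : ℝ} (hd : 2 ≤ d) (hx : 1 ≤ x) :
    K * log d + log x ≤ log d * (K + logb 2 x) := by
  have hlog2 : 0 < log 2 := log_pos one_lt_two
  have hlogd : log 2 ≤ log d := log_le_log two_pos hd
  have hlogx : 0 ≤ log x := log_nonneg hx
  have : log x ≤ log d * logb 2 x := by
    rw [logb, mul_div_assoc', le_div_iff₀ hlog2, mul_comm]
    exact mul_le_mul_of_nonneg_right hlogd hlogx
  linarith

section SampleSize

variable {ε δ : ℝ} {d N K m : ℕ}

lemma two_mul_mul_add_log_le_of_sample_size (hε : 0 < ε) (hδ : 0 < δ) (hδ1 : δ ≤ 1)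
    (hd : 2 ≤ d) (hN : 1 ≤ N)
    (hm : (m : ℝ) ≥ (2 * log d) * N / ε * (K + logb 2 (2 * N / δ))) :
    2 * N * (K * log d + log (2 * N / δ)) ≤ ε * m := by
  have hx : 1 ≤ 2 * (N : ℝ) / δ := by
    rw [le_div_iff₀ hδ]
    have : (1 : ℝ) ≤ N := by exact_mod_cast hN
    linarith
  calc 2 * N * (K * log d + log (2 * N / δ))
      ≤ 2 * N * (log d * (K + logb 2 (2 * N / δ))) := by
        gcongr
        exact mul_log_add_log_le_log_mul_add_logb_two (by exact_mod_cast hd) hx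
    _ = ε * ((2 * log d) * N / ε * (K + logb 2 (2 * N / δ))) := by
        field_simp
    _ ≤ ε * m := by gcongr

variable (h : 2 * N * (K * log d + log (2 * N / δ)) ≤ ε * m)
include h

lemma natCast_mul_exp_neg_le_half (hδ : 0 < δ) (hd : 1 ≤ d) (hN : 0 < N) :
    N * exp (-(ε / (2 * N) * m)) ≤ δ / 2 := by
  have hN' : (0 : ℝ) < N := by exact_mod_cast hN
  have hKd : 0 ≤ (K : ℝ) * log d := mul_nonneg K.cast_nonneg (log_nonneg (by exact_mod_cast hd))
  refine mul_exp_neg_le_of_log_div_le hN' (by positivity) ?_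
  rw [show (N : ℝ) / (δ / 2) = 2 * N / δ by ring, div_mul_eq_mul_div, le_div_iff₀ (by positivity)]
  nlinarith

lemma pow_mul_exp_neg_le_half (hδ : 0 < δ) (hδ1 : δ ≤ 1) (hd : 1 ≤ d) (hN : 1 ≤ N) :
    (d : ℝ) ^ (K * N) * exp (-(ε / 2 * m)) ≤ δ / 2 := by
  have hN' : (1 : ℝ) ≤ N := by exact_mod_cast hN
  have hd' : (0 : ℝ) < d := by exact_mod_cast hd
  have hlog : log (2 / δ) ≤ log (2 * N / δ) := by gcongr; linarith
  have hlog0 : 0 ≤ log (2 / δ) := log_nonneg (by rw [le_div_iff₀ hδ]; linarith)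
  refine mul_exp_neg_le_of_log_div_le (by positivity) (by positivity) ?_
  rw [div_div_eq_mul_div, mul_div_assoc, log_mul (by positivity) (by positivity), log_pow]
  push_cast
  nlinarith

end SampleSize

/-- Probabilistic core of Theorem 2: with
`m ≥ (2 ln d) · N / ε · (K + log₂(2N/δ))` independent samples, with
probability at least `1 - δ`, every frequently-used action `j ∈ J`
(`|J| ≤ N`, `μ(E j) ≥ ε/(2N)`) is observed in some sample and every
inadequate precondition assignment `b ∈ B` (`|B| ≤ d^(K·N)`,
`μ(W b) ≥ ε/2`) is ruled out by some sample. -/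
theorem theorem2_probabilistic_core {Ω : Type*} [MeasurableSpace Ω]
    (μ : Measure Ω) [IsProbabilityMeasure μ]
    (ε δ : ℝ) (hε : ε ∈ Set.Ioo (0 : ℝ) 1) (hδ : δ ∈ Set.Ioo (0 : ℝ) 1)
    (d N K : ℕ) (hd : 2 ≤ d) (hN : 1 ≤ N)
    {ι : Type*} (J : Finset ι) (hJ : J.card ≤ N)
    (E : ι → Set Ω)
    (hEm : ∀ j ∈ J, MeasurableSet (E j))
    (hE : ∀ j ∈ J, ENNReal.ofReal (ε / (2 * N)) ≤ μ (E j))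
    {β : Type*} (B : Finset β) (hB : B.card ≤ d ^ (K * N))
    (W : β → Set Ω)
    (hWm : ∀ b ∈ B, MeasurableSet (W b))
    (hW : ∀ b ∈ B, ENNReal.ofReal (ε / 2) ≤ μ (W b))
    (m : ℕ)
    (hm : (m : ℝ) ≥ (2 * Real.log d) * N / ε * (K + Real.logb 2 (2 * N / δ))) :
    ENNReal.ofReal (1 - δ) ≤
      Measure.pi (fun _ : Fin m => μ)
        {ω : Fin m → Ω |
          (∀ j ∈ J, ∃ i : Fin m, ω i ∈ E j) ∧
          (∀ b ∈ B, ∃ i : Fin m, ω i ∈ W b)} := by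
  obtain ⟨hε0, -⟩ := hε
  obtain ⟨hδ0, hδ1⟩ := hδ
  have hd1 : 1 ≤ d := by omega
  have hsample := two_mul_mul_add_log_le_of_sample_size hε0 hδ0 hδ1.le hd hN hm
  have hJδ : (J.card : ℝ) * exp (-(ε / (2 * N) * m)) ≤ δ / 2 :=
    (mul_le_mul_of_nonneg_right (by exact_mod_cast hJ) (exp_nonneg _)).trans
      (natCast_mul_exp_neg_le_half hsample hδ0 hd1 hN)
  have hBδ : (B.card : ℝ) * exp (-(ε / 2 * m)) ≤ δ / 2 :=
    (mul_le_mul_of_nonneg_right (by exact_mod_cast hB) (exp_nonneg _)).trans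
      (pow_mul_exp_neg_le_half hsample hδ0 hδ1.le hd1 hN)
  apply ENNReal.ofReal_one_sub_le_of_measure_compl_le hδ0.le
  calc _ ≤ Measure.pi (fun _ : Fin m => μ)
        ({ω | ∃ j ∈ J, ∀ i, ω i ∉ E j} ∪ {ω | ∃ b ∈ B, ∀ i, ω i ∉ W b}) := by
        refine measure_mono fun ω hω => ?_
        simp only [Set.mem_compl_iff, Set.mem_ofPred_eq, Set.mem_union, not_and_or] at hω ⊢
        push Not at hω
        exact hω
    _ ≤ ENNReal.ofReal (J.card * exp (-(ε / (2 * N) * m))) +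
          ENNReal.ofReal (B.card * exp (-(ε / 2 * m))) :=
        (measure_union_le _ _).trans (add_le_add
          (measure_pi_exists_forall_notMem_le μ m J hEm hE)
          (measure_pi_exists_forall_notMem_le μ m B hWm hW))
    _ ≤ ENNReal.ofReal δ := by
        rw [← ENNReal.ofReal_add (by positivity) (by positivity)]
        exact ENNReal.ofReal_le_ofReal (by linarith)
end
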